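/- (Epipolar constraint for the fundamental matrix F(b).) Let b ∈ ℝ⁷ and let X ∈ ℝ³ with X₃ ≠ 0. Let x = β(X) ∈ ℝ² and let y ∈ ℝ² be the first two coordinates of M(b)(X;1) (whose third coordinate is always 1, so y = β(M(b)(X;1))). Then (y₁, y₂, 1) · F(b) · (x₁, x₂, 1)ᵀ = 0. -/
import Mathlib


open Matrix

/-- The 3×4 camera matrix `M(b)` with rows `(1, b₁, b₂, b₃)`, `(b₄, b₅, b₆, b₇)`,
`(0, 0, 0, 1)`. -/
def Mcam (b : Fin 7 → ℝ) : Matrix (Fin 3) (Fin 4) ℝ :=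
  !![1, b 0, b 1, b 2; b 3, b 4, b 5, b 6; 0, 0, 0, 1]

/-- The fundamental matrix `F(b)` with rows `(b₄, b₅, b₆)`, `(−1, −b₁, −b₂)`,
`(−b₃b₄+b₇, −b₃b₅+b₁b₇, −b₃b₆+b₂b₇)`. -/
def Fmat (b : Fin 7 → ℝ) : Matrix (Fin 3) (Fin 3) ℝ :=
  !![b 3, b 4, b 5;
     -1, -(b 0), -(b 1);
     -(b 2) * b 3 + b 6, -(b 2) * b 4 + b 0 * b 6, -(b 2) * b 5 + b 1 * b 6]

/-- `(X; 1) ∈ ℝ⁴`, appending a `1` to `X ∈ ℝ³`. -/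
def app1 (X : Fin 3 → ℝ) : Fin 4 → ℝ :=
  ![X 0, X 1, X 2, 1]

/-- Epipolar constraint for the fundamental matrix `F(b)`: if `X ∈ ℝ³` with `X₃ ≠ 0`,
`x = β(X)` and `y` is given by the first two coordinates of `M(b)(X;1)` (whose third
coordinate is always `1`, so `y = β(M(b)(X;1))`), then `(y₁,y₂,1)·F(b)·(x₁,x₂,1)ᵀ = 0`. -/
theorem epipolar_constraint_Fmat
    (b : Fin 7 → ℝ) (X : Fin 3 → ℝ) (hX : X 2 ≠ 0)
    (x y : Fin 2 → ℝ)
    (hx : x = ![X 0 / X 2, X 1 / X 2])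
    (hy : ∀ j : Fin 2, y j = (Mcam b).mulVec (app1 X) j.castSucc) :
    ![y 0, y 1, 1] ⬝ᵥ (Fmat b).mulVec ![x 0, x 1, 1] = 0 := by
  have h0 := hy 0
  have h1 := hy 1
  subst hx
  simp [Mcam, app1, mulVec, dotProduct, Fin.sum_univ_succ] at h0 h1 ⊢
  rw [h0, h1, Fmat]
  simp [mulVec, dotProduct, Fin.sum_univ_succ]
  field_simp
  ring
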